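/- For every t ∈ [0,T) and every x < x* = μθ/(μ+r), it is not optimal to stop immediately in the problem defining V^{1,L}: one has the strict inequality V^{1,L}(t,x) > x. -/

import Mathlib

open MeasureTheory ProbabilityTheory Real Filter Set
open scoped NNReal ENNReal Topology

/-!
Stopping at a small deterministic time `s > 0` already beats stopping at once: the expected
discounted payoff at a deterministic time is `e^{-rs} m(s,x)`, whose derivative at `s = 0` is
`μθ - (μ+r)x > 0`.

`V^{1,L}` is an `sSup` of reals, so one must also show that the set of values is bounded above
(otherwise `sSup` is the junk value `0`). The discounted payoff is at most
`|x| + |θ| + |σ| sup_{u ≤ U} |W_u|` with `U = (e^{2μ(T-t)} - 1)/(2μ)`, and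
`E sup_{u ≤ U} |W_u| ≤ 2√U`. On a finite grid this follows from Doob's maximal inequality for the
submartingale `W²` together with the layer-cake formula. Continuity of paths and Fatou's lemma
then pass to the supremum over `[0, U]`.
-/

namespace OUSpread

variable {Ω : Type*} [MeasurableSpace Ω]

/-- Standard Brownian motion on `[0, ∞)` (indexed by `ℝ`). -/
structure IsStdBrownian (P : Measure Ω) (W : ℝ → Ω → ℝ) : Prop where
  measurable : ∀ t : ℝ, Measurable (W t)
  cont : ∀ ω, Continuous fun t => W t ω
  start : ∀ ω, W 0 ω = 0
  gauss : ∀ s t : ℝ, 0 ≤ s → s ≤ t →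
    Measure.map (fun ω => W t ω - W s ω) P = gaussianReal 0 (Real.toNNReal (t - s))
  indep : ∀ (n : ℕ) (t : Fin (n + 1) → ℝ), Monotone t → 0 ≤ t 0 →
    iIndepFun
      (fun i : Fin n => fun ω => W (t i.succ) ω - W (t i.castSucc) ω) P

/-- Mean of the OU process at time `s` started from `x`. -/
noncomputable def mOU (μ θ s x : ℝ) : ℝ := x * exp (-(μ * s)) + θ * (1 - exp (-(μ * s)))

/-- Variance of the OU process at time `s`. -/
noncomputable def varOU (μ σ s : ℝ) : ℝ := σ ^ 2 / (2 * μ) * (1 - exp (-(2 * μ * s)))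

/-- The time change turning Brownian motion into an OU process. -/
noncomputable def tc (μ s : ℝ) : ℝ := (exp (2 * μ * s) - 1) / (2 * μ)

/-- The OU process started at `x`, realized as a time-changed Brownian motion;
this is the strong solution of `dX = μ(θ - X) ds + σ dB`, `X_0 = x`. -/
noncomputable def X (μ σ θ : ℝ) (W : ℝ → Ω → ℝ) (x s : ℝ) (ω : Ω) : ℝ :=
  mOU μ θ s x + σ * exp (-(μ * s)) * W (tc μ s) ω

/-- Time-changed Brownian filtration `G_s = σ(W_u : 0 ≤ u ≤ tc μ s)`. -/
noncomputable def ouFilt (μ : ℝ) (W : ℝ → Ω → ℝ) (s : ℝ) : MeasurableSpace Ω :=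
  ⨆ u ∈ Set.Icc (0 : ℝ) (tc μ s), MeasurableSpace.comap (W u) inferInstance

/-- `τ` is a stopping time of the filtration `G`. -/
def IsStopTime (G : ℝ → MeasurableSpace Ω) (τ : Ω → ℝ) : Prop :=
  ∀ s : ℝ, MeasurableSet[G s] {ω | τ ω ≤ s}

noncomputable def H1L (μ θ r y : ℝ) : ℝ := -(μ + r) * y + μ * θ

/-- Value function of the long position: `V^{1,L}(t,x) = sup_{0 ≤ ζ ≤ T-t} E[e^{-rζ} X^x_ζ]`. -/
noncomputable def V1L (P : Measure Ω) (μ σ θ r T : ℝ) (W : ℝ → Ω → ℝ) (t x : ℝ) : ℝ :=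
  sSup {v : ℝ | ∃ ζ : Ω → ℝ, IsStopTime (ouFilt μ W) ζ ∧
    (∀ᵐ ω ∂P, ζ ω ∈ Set.Icc 0 (T - t)) ∧
    v = ∫ ω, exp (-(r * ζ ω)) * X μ σ θ W x (ζ ω) ω ∂P}

section Kolmogorov

variable {P : Measure Ω} [IsFiniteMeasure P] {Z : ℕ → Ω → ℝ}

lemma submartingale_sq_of_indep_increments (hZm : ∀ k, StronglyMeasurable (Z k))
    (hZ : ∀ k, MemLp (Z k) 2 P) (hmean : ∀ k, P[Z (k + 1) - Z k] = 0)
    (hindep : ∀ k, Indep (Filtration.natural Z hZm k)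
      (MeasurableSpace.comap (Z (k + 1) - Z k) inferInstance) P) :
    Submartingale (fun k ω => Z k ω ^ 2) (Filtration.natural Z hZm) P := by
  refine submartingale_of_setIntegral_le_succ
    (fun k => (Filtration.stronglyAdapted_natural hZm k).pow 2) (fun k => (hZ k).integrable_sq)
    fun k s hs => ?_
  set D := Z (k + 1) - Z k
  have hD : MemLp D 2 P := (hZ (k + 1)).sub (hZ k)
  have hsm : MeasurableSet s := (Filtration.natural Z hZm).le k s hs
  have hcross : ∫ ω in s, Z k ω * D ω ∂P = 0 := by
    have hind : IndepFun (s.indicator (Z k)) D P :=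
      indep_of_indep_of_le_left (hindep k)
        (((Filtration.stronglyAdapted_natural hZm k).indicator hs).measurable.comap_le)
    rw [← integral_indicator hsm]
    simp_rw [Set.indicator_mul_left]
    rw [hind.integral_fun_mul_eq_mul_integral
      (((hZ k).integrable one_le_two).indicator hsm).aestronglyMeasurable
      (hD.integrable one_le_two).aestronglyMeasurable, hmean, mul_zero]
  have hsplit : ∀ ω, Z (k + 1) ω ^ 2 = Z k ω ^ 2 + (2 * (Z k ω * D ω) + D ω ^ 2) := fun ω => by
    simp only [D, Pi.sub_apply]; ring
  have hprod : IntegrableOn (fun ω => Z k ω * D ω) s P :=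
    ((hZ k).integrable_mul hD).integrableOn
  simp_rw [hsplit]
  rw [integral_add (g := fun ω => 2 * (Z k ω * D ω) + D ω ^ 2)
      (hZ k).integrable_sq.integrableOn ((hprod.const_mul 2).add hD.integrable_sq.integrableOn),
    integral_add (hprod.const_mul 2) hD.integrable_sq.integrableOn, integral_const_mul, hcross]
  linarith [setIntegral_nonneg_of_ae (μ := P) (s := s) (ae_of_all _ fun ω => sq_nonneg (D ω))]

lemma meas_le_sup_abs_le_of_indep_increments (hZm : ∀ k, StronglyMeasurable (Z k))
    (hZ : ∀ k, MemLp (Z k) 2 P) (hmean : ∀ k, P[Z (k + 1) - Z k] = 0)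
    (hindep : ∀ k, Indep (Filtration.natural Z hZm k)
      (MeasurableSpace.comap (Z (k + 1) - Z k) inferInstance) P) (ε : ℝ≥0) (n : ℕ) :
    (ε : ℝ≥0∞) ^ 2 * P {ω | (ε : ℝ) ≤
      (Finset.range (n + 1)).sup' Finset.nonempty_range_add_one fun k => |Z k ω|} ≤
      ENNReal.ofReal (∫ ω, Z n ω ^ 2 ∂P) := by
  have hmax := maximal_ineq (submartingale_sq_of_indep_increments hZm hZ hmean hindep)
    (fun k ω => sq_nonneg (Z k ω)) (ε := ε ^ 2) n
  have hset : {ω | (ε : ℝ) ≤ (Finset.range (n + 1)).sup' Finset.nonempty_range_add_one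
      fun k => |Z k ω|} = {ω | ((ε ^ 2 : ℝ≥0) : ℝ) ≤ (Finset.range (n + 1)).sup'
        Finset.nonempty_range_add_one fun k => Z k ω ^ 2} := by
    ext ω
    simp only [Set.mem_ofPred_eq, Finset.le_sup'_iff, NNReal.coe_pow, ← sq_abs (Z _ ω)]
    exact exists_congr fun k => and_congr_right fun _ =>
      (pow_le_pow_iff_left₀ ε.coe_nonneg (abs_nonneg _) two_ne_zero).symm
  rw [hset, ← ENNReal.coe_pow]
  exact hmax.trans (ENNReal.ofReal_le_ofReal
    (setIntegral_le_integral (hZ n).integrable_sq (ae_of_all _ fun ω => sq_nonneg _)))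

end Kolmogorov

lemma lintegral_ofReal_le_of_meas_le_div_sq {P : Measure Ω} [IsProbabilityMeasure P]
    {X : Ω → ℝ} (hX0 : 0 ≤ X) (hXm : Measurable X) {c : ℝ} (hc : 0 < c)
    (htail : ∀ t > 0, P {ω | t ≤ X ω} ≤ ENNReal.ofReal (c / t ^ 2)) :
    ∫⁻ ω, ENNReal.ofReal (X ω) ∂P ≤ ENNReal.ofReal (2 * √c) := by
  set a := √c
  have ha : 0 < a := Real.sqrt_pos.2 hc
  have hrpow : ∀ t ∈ Ioi a, c / t ^ 2 = c * t ^ (-2 : ℝ) := fun t ht => by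
    rw [Real.rpow_neg (ha.trans ht).le, Real.rpow_two, div_eq_mul_inv]
  have hint : IntegrableOn (fun t => c / t ^ 2) (Ioi a) :=
    IntegrableOn.congr_fun
      ((integrableOn_Ioi_rpow_of_lt (a := -2) (by norm_num) ha).const_mul c)
      (fun t ht => (hrpow t ht).symm) measurableSet_Ioi
  have hint_eq : ∫ t in Ioi a, c / t ^ 2 = a := by
    rw [setIntegral_congr_fun measurableSet_Ioi hrpow, integral_const_mul,
      integral_Ioi_rpow_of_lt (by norm_num) ha]
    norm_num [Real.rpow_neg_one, ← div_eq_mul_inv]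
    exact Real.div_sqrt
  rw [lintegral_eq_lintegral_meas_le P (ae_of_all _ hX0) hXm.aemeasurable,
    ← Ioc_union_Ioi_eq_Ioi ha.le, lintegral_union measurableSet_Ioi (Ioc_disjoint_Ioi le_rfl)]
  calc _ ≤ (∫⁻ _ in Ioc 0 a, 1) + ∫⁻ t in Ioi a, ENNReal.ofReal (c / t ^ 2) :=
        add_le_add (lintegral_mono fun _ => prob_le_one)
          (setLIntegral_mono (by fun_prop) fun t ht => htail t (ha.trans ht))
    _ = ENNReal.ofReal (2 * a) := by
        rw [setLIntegral_one, Real.volume_Ioc, sub_zero, ← ofReal_integral_eq_lintegral_ofReal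
          hint (ae_of_all _ fun t => by positivity), hint_eq, ← ENNReal.ofReal_add ha.le ha.le,
          two_mul]

noncomputable def gridMaxAbs (f : ℝ → ℝ) (U : ℝ) (N : ℕ) : ℝ :=
  (Finset.range (N + 1)).sup' Finset.nonempty_range_add_one fun k => |f (k * U / N)|

lemma gridMaxAbs_nonneg (f : ℝ → ℝ) (U : ℝ) (N : ℕ) : 0 ≤ gridMaxAbs f U N :=
  (abs_nonneg _).trans
    (Finset.le_sup' (fun k : ℕ => |f (k * U / N)|) (Finset.mem_range.2 N.succ_pos))

lemma ofReal_abs_le_liminf_gridMaxAbs {f : ℝ → ℝ} (hf : Continuous f) {U u : ℝ}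
    (hu : u ∈ Icc 0 U) :
    ENNReal.ofReal |f u| ≤ liminf (fun N : ℕ => ENNReal.ofReal (gridMaxAbs f U N)) atTop := by
  obtain ⟨hu0, huU⟩ := hu
  set k : ℕ → ℕ := fun N => ⌊u / U * N⌋₊
  have hk : ∀ N, k N ≤ N := fun N => Nat.floor_le_of_le
    (mul_le_of_le_one_left N.cast_nonneg (div_le_one_of_le₀ huU (hu0.trans huU)))
  have hlim : Tendsto (fun N : ℕ => (k N : ℝ) * U / N) atTop (𝓝 u) := by
    have h := ((tendsto_nat_floor_mul_div_atTop (div_nonneg hu0 (hu0.trans huU))).comp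
      tendsto_natCast_atTop_atTop).mul_const U
    have hu : u / U * U = u := by
      rcases (hu0.trans huU).eq_or_lt with hU | hU
      · simp [← hU, le_antisymm (hU ▸ huU) hu0]
      · exact div_mul_cancel₀ u hU.ne'
    rw [hu] at h
    refine h.congr fun N => ?_
    simp only [Function.comp_apply, k]
    ring
  have htend : Tendsto (fun N : ℕ => ENNReal.ofReal |f (k N * U / N)|) atTop
      (𝓝 (ENNReal.ofReal |f u|)) :=
    ((ENNReal.continuous_ofReal.comp (continuous_abs.comp hf)).tendsto u).comp hlim
  rw [← htend.liminf_eq]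
  exact liminf_le_liminf (Eventually.of_forall fun N => ENNReal.ofReal_le_ofReal
    (Finset.le_sup' (fun j : ℕ => |f (j * U / N)|) (Finset.mem_range_succ_iff.2 (hk N))))

lemma HasDerivAt.eventually_nhdsGT_lt {f : ℝ → ℝ} {f' a : ℝ} (hf : HasDerivAt f f' a)
    (hf' : 0 < f') : ∀ᶠ s in 𝓝[>] a, f a < f s := by
  filter_upwards [((hasDerivAt_iff_tendsto_slope.1 hf).mono_left (nhdsGT_le_nhdsNE a)).eventually
    (lt_mem_nhds hf'), self_mem_nhdsWithin] with s hslope hs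
  rw [slope_def_field] at hslope
  exact sub_pos.1 ((div_pos_iff_of_pos_right (sub_pos.2 hs)).1 hslope)

namespace IsStdBrownian

variable {P : Measure Ω} {W : ℝ → Ω → ℝ}

lemma hasLaw_sub (hW : IsStdBrownian P W) {a b : ℝ} (ha : 0 ≤ a) (hab : a ≤ b) :
    HasLaw (fun ω => W b ω - W a ω) (gaussianReal 0 (b - a).toNNReal) P where
  aemeasurable := ((hW.measurable b).sub (hW.measurable a)).aemeasurable
  map_eq := hW.gauss a b ha hab

lemma hasLaw_eval (hW : IsStdBrownian P W) {u : ℝ} (hu : 0 ≤ u) :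
    HasLaw (W u) (gaussianReal 0 u.toNNReal) P := by
  simpa [hW.start] using hW.hasLaw_sub le_rfl hu

lemma memLp_eval (hW : IsStdBrownian P W) {u : ℝ} (hu : 0 ≤ u) (p : ℝ≥0) :
    MemLp (W u) p P := by
  have h := (hW.hasLaw_eval hu).map_eq ▸ memLp_id_gaussianReal (μ := 0) (v := u.toNNReal) p
  exact (memLp_map_measure_iff aestronglyMeasurable_id (hW.measurable u).aemeasurable).1 h

lemma integral_eval (hW : IsStdBrownian P W) {u : ℝ} (hu : 0 ≤ u) : P[W u] = 0 := by
  rw [(hW.hasLaw_eval hu).integral_eq, integral_id_gaussianReal]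

lemma integral_eval_sq (hW : IsStdBrownian P W) {u : ℝ} (hu : 0 ≤ u) :
    ∫ ω, W u ω ^ 2 ∂P = u := by
  rw [← variance_of_integral_eq_zero (hW.measurable u).aemeasurable (hW.integral_eval hu),
    (hW.hasLaw_eval hu).variance_eq, variance_id_gaussianReal, Real.coe_toNNReal _ hu]

lemma indep_natural_increment (hW : IsStdBrownian P W) {s : ℕ → ℝ} (hs : Monotone s)
    (hs0 : s 0 = 0) (k : ℕ) :
    Indep (Filtration.natural (fun j => W (s j))
        (fun j => (hW.measurable (s j)).stronglyMeasurable) k)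
      (MeasurableSpace.comap (W (s (k + 1)) - W (s k)) inferInstance) P := by
  set ξ : Fin (k + 1) → Ω → ℝ := fun i ω => W (s (i + 1)) ω - W (s i) ω
  set past : Set (Fin (k + 1)) := {i | (i : ℕ) < k}
  have hξ : iIndepFun ξ P :=
    hW.indep (k + 1) (fun i => s i) (fun i j hij => hs hij) (by simpa using hs0.ge)
  have hpast : Indep (⨆ i ∈ past, .comap (ξ i) inferInstance)
      (⨆ i ∈ {Fin.last k}, .comap (ξ i) inferInstance) P :=
    indep_iSup_of_disjoint (fun i => ((hW.measurable _).sub (hW.measurable _)).comap_le)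
      hξ.iIndep (Set.disjoint_singleton_right.2 (by simp [past]))
  have hW_past :
      ∀ j ≤ k, Measurable[⨆ i ∈ past, .comap (ξ i) inferInstance] (W (s j)) := by
    intro j
    induction j with
    | zero =>
      intro _
      have h0 : W (s 0) = fun _ => 0 := by rw [hs0]; exact funext hW.start
      exact h0 ▸ measurable_const
    | succ j ih =>
      intro hj
      have hξj : Measurable[⨆ i ∈ past, .comap (ξ i) inferInstance] (ξ ⟨j, by omega⟩) :=
        (comap_measurable _).mono (le_iSup₂_of_le (f := fun i (_ : i ∈ past) =>
          MeasurableSpace.comap (ξ i) inferInstance) ⟨j, by omega⟩ hj le_rfl) le_rfl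
      have : W (s (j + 1)) = W (s j) + ξ ⟨j, by omega⟩ := by
        ext ω; simp [ξ]
      exact this ▸ (ih (by omega)).add hξj
  refine indep_of_indep_of_le_left (indep_of_indep_of_le_right hpast ?_) ?_
  · exact le_iSup₂_of_le (Fin.last k) rfl le_rfl
  · exact iSup₂_le fun j hj => (hW_past j hj).comap_le

lemma meas_le_gridMaxAbs_le [IsProbabilityMeasure P] (hW : IsStdBrownian P W) {U : ℝ}
    (hU : 0 ≤ U) (N : ℕ) {ε : ℝ} (hε : 0 < ε) :
    P {ω | ε ≤ gridMaxAbs (fun t => W t ω) U N} ≤ ENNReal.ofReal (U / ε ^ 2) := by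
  set s : ℕ → ℝ := fun k => k * U / N
  have hs : Monotone s := fun i j hij => by simp only [s]; gcongr
  have hs0 : ∀ k, 0 ≤ s k := fun k => by positivity
  have hsN : s N ≤ U := div_le_of_le_mul₀ N.cast_nonneg hU (by rw [mul_comm])
  have hkol := meas_le_sup_abs_le_of_indep_increments (P := P) (Z := fun k => W (s k)) _
    (fun k => hW.memLp_eval (hs0 k) 2)
    (fun k => by
      rw [integral_sub' ((hW.memLp_eval (hs0 _) 1).integrable le_rfl)
        ((hW.memLp_eval (hs0 _) 1).integrable le_rfl), hW.integral_eval (hs0 _),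
        hW.integral_eval (hs0 _), sub_zero])
    (hW.indep_natural_increment hs (by simp [s])) ⟨ε, hε.le⟩ N
  rw [hW.integral_eval_sq (hs0 N)] at hkol
  rw [ENNReal.ofReal_div_of_pos (by positivity), ENNReal.le_div_iff_mul_le (by simp [hε.ne'])
    (by simp), mul_comm, ENNReal.ofReal_pow hε.le, ENNReal.ofReal_eq_coe_nnreal hε.le]
  exact hkol.trans (ENNReal.ofReal_le_ofReal hsN)

lemma lintegral_abs_comp_le [IsProbabilityMeasure P] (hW : IsStdBrownian P W) {U : ℝ}
    (hU : 0 < U) {τ : Ω → ℝ} (hτ : ∀ᵐ ω ∂P, τ ω ∈ Icc 0 U) :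
    ∫⁻ ω, ENNReal.ofReal |W (τ ω) ω| ∂P ≤ ENNReal.ofReal (2 * √U) := by
  have hgrid : ∀ N, ∫⁻ ω, ENNReal.ofReal (gridMaxAbs (fun t => W t ω) U N) ∂P ≤
      ENNReal.ofReal (2 * √U) := fun N =>
    lintegral_ofReal_le_of_meas_le_div_sq (fun ω => gridMaxAbs_nonneg _ U N)
      (Finset.measurable_range_sup'' fun k _ => (hW.measurable _).abs) hU
      fun _ ht => hW.meas_le_gridMaxAbs_le hU.le N ht
  calc ∫⁻ ω, ENNReal.ofReal |W (τ ω) ω| ∂P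
      ≤ ∫⁻ ω, liminf (fun N : ℕ => ENNReal.ofReal (gridMaxAbs (fun t => W t ω) U N)) atTop
          ∂P :=
        lintegral_mono_ae (hτ.mono fun ω hω => ofReal_abs_le_liminf_gridMaxAbs (hW.cont ω) hω)
    _ ≤ liminf (fun N : ℕ => ∫⁻ ω, ENNReal.ofReal (gridMaxAbs (fun t => W t ω) U N) ∂P)
          atTop :=
        lintegral_liminf_le fun N =>
          (Finset.measurable_range_sup'' fun k _ => (hW.measurable _).abs).ennreal_ofReal
    _ ≤ ENNReal.ofReal (2 * √U) :=
        (liminf_le_liminf (Eventually.of_forall hgrid)).trans (liminf_const _).le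

end IsStdBrownian

lemma tc_monotone {μ : ℝ} (hμ : 0 ≤ μ) : Monotone (tc μ) := fun s s' h => by
  unfold tc
  gcongr

lemma tc_nonneg {μ s : ℝ} (hμ : 0 ≤ μ) (hs : 0 ≤ s) : 0 ≤ tc μ s := by
  simpa [tc] using tc_monotone hμ hs

lemma tc_pos {μ s : ℝ} (hμ : 0 < μ) (hs : 0 < s) : 0 < tc μ s :=
  div_pos (sub_pos.2 (one_lt_exp_iff.2 (by positivity))) (by positivity)

lemma abs_mOU_le {μ θ s x : ℝ} (hμ : 0 ≤ μ) (hs : 0 ≤ s) :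
    |mOU μ θ s x| ≤ |x| + |θ| := by
  have he0 : 0 < exp (-(μ * s)) := exp_pos _
  have he1 : exp (-(μ * s)) ≤ 1 := exp_le_one_iff.2 (neg_nonpos.2 (mul_nonneg hμ hs))
  calc |mOU μ θ s x| ≤ |x * exp (-(μ * s))| + |θ * (1 - exp (-(μ * s)))| := abs_add_le _ _
    _ = |x| * exp (-(μ * s)) + |θ| * (1 - exp (-(μ * s))) := by
        rw [abs_mul, abs_mul, abs_of_pos he0, abs_of_nonneg (sub_nonneg.2 he1)]
    _ ≤ |x| + |θ| := by nlinarith [abs_nonneg x, abs_nonneg θ]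

lemma abs_exp_mul_mOU_add_le {μ σ θ r s x : ℝ} (hμ : 0 ≤ μ) (hr : 0 ≤ r) (hs : 0 ≤ s)
    (w : ℝ) :
    |exp (-(r * s)) * (mOU μ θ s x + σ * exp (-(μ * s)) * w)| ≤ |x| + |θ| + |σ| * |w| := by
  have hμs : exp (-(μ * s)) ≤ 1 := exp_le_one_iff.2 (neg_nonpos.2 (mul_nonneg hμ hs))
  calc |exp (-(r * s)) * (mOU μ θ s x + σ * exp (-(μ * s)) * w)|
      ≤ |mOU μ θ s x + σ * exp (-(μ * s)) * w| := by
        rw [abs_mul, abs_of_pos (exp_pos _)]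
        exact mul_le_of_le_one_left (abs_nonneg _)
          (exp_le_one_iff.2 (neg_nonpos.2 (mul_nonneg hr hs)))
    _ ≤ |mOU μ θ s x| + |σ * exp (-(μ * s)) * w| := abs_add_le _ _
    _ ≤ |x| + |θ| + |σ| * |w| := by
        rw [abs_mul, abs_mul, abs_of_pos (exp_pos _)]
        gcongr
        · exact abs_mOU_le hμ hs
        · exact mul_le_of_le_one_right (abs_nonneg σ) hμs

lemma hasDerivAt_exp_mul_mOU (μ θ r x : ℝ) :
    HasDerivAt (fun s => exp (-(r * s)) * mOU μ θ s x) (μ * θ - (μ + r) * x) 0 := by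
  have hexp : ∀ c : ℝ, HasDerivAt (fun s => exp (-(c * s))) (-c) 0 := fun c => by
    simpa using ((hasDerivAt_id (0 : ℝ)).const_mul c).neg.exp
  have hfun : (fun s => exp (-(r * s)) * mOU μ θ s x) =
      fun s => (x - θ) * exp (-((μ + r) * s)) + θ * exp (-(r * s)) := by
    ext s
    rw [mOU, show -((μ + r) * s) = -(μ * s) + -(r * s) by ring, exp_add]
    ring
  rw [hfun]
  exact (((hexp (μ + r)).const_mul (x - θ)).add ((hexp r).const_mul θ)).congr_deriv (by ring)

section Payoff

variable {P : Measure Ω} [IsProbabilityMeasure P] {W : ℝ → Ω → ℝ} {μ σ θ r x : ℝ}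

lemma integral_exp_mul_X_const (hW : IsStdBrownian P W) (hμ : 0 ≤ μ) {s : ℝ} (hs : 0 ≤ s) :
    ∫ ω, exp (-(r * s)) * X μ σ θ W x s ω ∂P = exp (-(r * s)) * mOU μ θ s x := by
  have hint := ((hW.memLp_eval (tc_nonneg hμ hs) 1).integrable le_rfl).const_mul
    (σ * exp (-(μ * s)))
  simp only [integral_const_mul, X]
  rw [integral_add (integrable_const _) hint, integral_const_mul,
    hW.integral_eval (tc_nonneg hμ hs)]
  simp

lemma integral_exp_mul_X_le (hW : IsStdBrownian P W) (hμ : 0 < μ) (hr : 0 ≤ r) {S : ℝ}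
    (hS : 0 < S) {ζ : Ω → ℝ} (hζ : ∀ᵐ ω ∂P, ζ ω ∈ Icc 0 S) :
    ∫ ω, exp (-(r * ζ ω)) * X μ σ θ W x (ζ ω) ω ∂P ≤
      |x| + |θ| + |σ| * (2 * √(tc μ S)) := by
  have hτ : ∀ᵐ ω ∂P, tc μ (ζ ω) ∈ Icc 0 (tc μ S) :=
    hζ.mono fun ω h => ⟨tc_nonneg hμ.le h.1, tc_monotone hμ.le h.2⟩
  have hlint : ∫⁻ ω, ENNReal.ofReal ‖exp (-(r * ζ ω)) * X μ σ θ W x (ζ ω) ω‖ ∂P ≤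
      ENNReal.ofReal (|x| + |θ| + |σ| * (2 * √(tc μ S))) :=
    calc _ ≤ ∫⁻ ω, ENNReal.ofReal (|x| + |θ|) +
          ENNReal.ofReal |σ| * ENNReal.ofReal |W (tc μ (ζ ω)) ω| ∂P :=
          lintegral_mono_ae (hζ.mono fun ω h => by
            rw [Real.norm_eq_abs, ← ENNReal.ofReal_mul (abs_nonneg σ),
              ← ENNReal.ofReal_add (by positivity) (by positivity)]
            exact ENNReal.ofReal_le_ofReal (abs_exp_mul_mOU_add_le hμ.le hr h.1 _))
      _ = ENNReal.ofReal (|x| + |θ|) +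
          ENNReal.ofReal |σ| * ∫⁻ ω, ENNReal.ofReal |W (tc μ (ζ ω)) ω| ∂P := by
          rw [lintegral_add_left measurable_const, lintegral_const, measure_univ, mul_one,
            lintegral_const_mul' _ _ ENNReal.ofReal_ne_top]
      _ ≤ ENNReal.ofReal (|x| + |θ|) +
          ENNReal.ofReal |σ| * ENNReal.ofReal (2 * √(tc μ S)) := by
          gcongr
          exact hW.lintegral_abs_comp_le (tc_pos hμ hS) hτ
      _ = _ := by
          rw [← ENNReal.ofReal_mul (abs_nonneg σ),
            ← ENNReal.ofReal_add (by positivity) (by positivity)]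
  exact (Real.le_norm_self _).trans ((norm_integral_le_lintegral_norm _).trans
    (ENNReal.toReal_le_of_le_ofReal (by positivity) hlint))

end Payoff

theorem V1L_strict_above_payoff_below_xstar_general (P : Measure Ω) [IsProbabilityMeasure P]
    (μ σ θ r T : ℝ) (hμ : 0 < μ) (hr : 0 < r)
    (W : ℝ → Ω → ℝ) (hW : IsStdBrownian P W)
    (t x : ℝ) (ht : t ∈ Set.Ico 0 T) (hx : x < μ * θ / (μ + r)) :
    x < V1L P μ σ θ r T W t x := by
  have hTt : 0 < T - t := sub_pos.2 ht.2
  have hgain : 0 < μ * θ - (μ + r) * x := by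
    rw [lt_div_iff₀ (by positivity)] at hx
    linarith
  obtain ⟨s, hxs, hs0, hsT⟩ := (HasDerivAt.eventually_nhdsGT_lt
    (hasDerivAt_exp_mul_mOU μ θ r x) hgain |>.and (Ioc_mem_nhdsGT hTt)).exists
  have hstop : IsStopTime (ouFilt μ W) fun _ => s := fun u => MeasurableSet.const (s ≤ u)
  refine lt_csSup_of_lt ⟨|x| + |θ| + |σ| * (2 * √(tc μ (T - t))), ?_⟩
    ⟨fun _ => s, hstop, ae_of_all _ fun _ => ⟨hs0.le, hsT⟩,
      (integral_exp_mul_X_const hW hμ.le hs0.le).symm⟩ (by simpa [mOU] using hxs)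
  rintro v ⟨ζ, -, hζ, rfl⟩
  exact integral_exp_mul_X_le hW hμ hr.le hTt hζ

/-- for `t ∈ [0,T)` and `x < x* = μθ/(μ+r)`, it is not optimal to stop
immediately: `V^{1,L}(t,x) > x`. -/
theorem V1L_strict_above_payoff_below_xstar (P : Measure Ω) [IsProbabilityMeasure P]
    (μ σ θ r T : ℝ) (hμ : 0 < μ) (hσ : 0 < σ) (hr : 0 < r) (hT : 0 < T)
    (W : ℝ → Ω → ℝ) (hW : IsStdBrownian P W)
    (t x : ℝ) (ht : t ∈ Set.Ico 0 T) (hx : x < μ * θ / (μ + r)) :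
    x < V1L P μ σ θ r T W t x :=
  V1L_strict_above_payoff_below_xstar_general P μ σ θ r T hμ hr W hW t x ht hx

end OUSpread
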